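/- arXiv:1405.3874 — 2 statements merged into one kernel-verified Lean document; each statement's English description precedes it below -/
import Mathlib

section
/- Let Ω be a connected open subset of ℂ, let T_0 and T_1 be operators in B_1(Ω) on Hilbert spaces H_0 and H_1, and let S : H_1 → H_0 be a nonzero bounded operator with T_0 S = S T_1. For μ > 0 let T_μ = [[T_0, μS],[0, T_1]] on H_0 ⊕ H_1. Then for μ, μ̃ > 0, the operators T_μ and T_{μ̃} are unitarily equivalent if and only if μ = μ̃. -/
/-!
Let `U` be a unitary with `U T_μ = T_μ' U`, and let `A`, `W` be the entries of the first column
of its block matrix. Comparing first columns gives `A T₀ = T₀ A + μ' S W` and `W T₀ = T₁ W`, so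
`⁅T₀, A⁆ = -μ' S W` commutes with `T₀`. By the Kleinecke–Shirokov estimate this commutator is
quasinilpotent; it preserves each line `ker (T₀ - w)`, hence vanishes on it, and since these lines
span `H₀`, `S W = 0`.

The lines `ker (T - z)` of an operator in `B₁(Ω)` carry local holomorphic frames, so by the
identity theorem a bounded operator killing `ker (T - z)` for `z` accumulating in `Ω` kills all of
them. As `S ≠ 0`, `S` is therefore injective on `ker (T₁ - z)` off a discrete set of `z`, where `W`
must kill `ker (T₀ - z)`; hence `W = 0`.

The same holds for `U⁻¹`, so `U` is block diagonal with `A` isometric, and comparing the entries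
in position `(1, 2)` gives `μ A S = μ' S D`, whence `μ ‖S‖ ≤ μ' ‖S‖`. By symmetry `μ = μ'`.
-/

noncomputable section

open ContinuousLinearMap
open scoped InnerProductSpace

/-- The Cowen–Douglas class `B_n(Ω)`: `Ω ⊆ σ(T)`, `T - w` is surjective for every `w ∈ Ω`,
the closed linear span of the kernels `ker (T - w)`, `w ∈ Ω`, is all of `H`, and
`dim ker (T - w) = n` for every `w ∈ Ω`. -/
def CowenDouglas {H : Type*} [NormedAddCommGroup H] [InnerProductSpace ℂ H]
    (n : ℕ) (Ω : Set ℂ) (T : H →L[ℂ] H) : Prop :=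
  Ω ⊆ spectrum ℂ T ∧
  (∀ w ∈ Ω, Function.Surjective (T - w • (1 : H →L[ℂ] H))) ∧
  (⨆ w ∈ Ω, LinearMap.ker ((T - w • (1 : H →L[ℂ] H) : H →L[ℂ] H) : H →ₗ[ℂ] H)).topologicalClosure = ⊤ ∧
  (∀ w ∈ Ω, Module.finrank ℂ (LinearMap.ker ((T - w • (1 : H →L[ℂ] H) : H →L[ℂ] H) : H →ₗ[ℂ] H)) = n)

/-- The block operator `[[T₀, S], [0, T₁]]` acting on the Hilbert space orthogonal direct
sum `H₀ ⊕ H₁` (realized as the `ℓ²`-product `WithLp 2 (H₀ × H₁)`). -/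
def blockOp₂ {H₀ H₁ : Type*} [NormedAddCommGroup H₀] [NormedSpace ℂ H₀]
    [NormedAddCommGroup H₁] [NormedSpace ℂ H₁]
    (T₀ : H₀ →L[ℂ] H₀) (S : H₁ →L[ℂ] H₀) (T₁ : H₁ →L[ℂ] H₁) :
    WithLp 2 (H₀ × H₁) →L[ℂ] WithLp 2 (H₀ × H₁) :=
  ((WithLp.prodContinuousLinearEquiv 2 ℂ H₀ H₁).symm : H₀ × H₁ →L[ℂ] WithLp 2 (H₀ × H₁)) ∘L
    ((T₀ ∘L fst ℂ H₀ H₁ + S ∘L snd ℂ H₀ H₁).prod (T₁ ∘L snd ℂ H₀ H₁)) ∘L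
    ((WithLp.prodContinuousLinearEquiv 2 ℂ H₀ H₁) : WithLp 2 (H₀ × H₁) →L[ℂ] H₀ × H₁)

/-- Two bounded operators are unitarily equivalent if there is a unitary `U` with `U A = B U`. -/
def UnitEquiv {H H' : Type*} [NormedAddCommGroup H] [InnerProductSpace ℂ H]
    [NormedAddCommGroup H'] [InnerProductSpace ℂ H']
    (A : H →L[ℂ] H) (B : H' →L[ℂ] H') : Prop :=
  ∃ U : H ≃ₗᵢ[ℂ] H', ∀ x, U (A x) = B (U x)

open Filter Topology Metric Set
open scoped Nat

section KleineckeShirokov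

variable {A : Type*} [Ring A]

def adEnd (a : A) : Module.End ℤ A := LinearMap.mulLeft ℤ a - LinearMap.mulRight ℤ a

theorem adEnd_apply (a x : A) : adEnd a x = ⁅a, x⁆ := rfl

theorem adEnd_pow_succ_apply (a x : A) (n : ℕ) :
    (adEnd a ^ (n + 1)) x = (adEnd a ^ n) ⁅a, x⁆ := by
  rw [pow_succ, Module.End.mul_apply, adEnd_apply]

theorem lie_mul_right (a x y : A) : ⁅a, x * y⁆ = ⁅a, x⁆ * y + x * ⁅a, y⁆ := by
  simp only [Ring.lie_def, mul_sub, sub_mul, mul_assoc]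
  abel

theorem adEnd_pow_mul_of_commute {a c : A} (hc : Commute a c) (n : ℕ) (y : A) :
    (adEnd a ^ n) (c * y) = c * (adEnd a ^ n) y := by
  induction n generalizing y with
  | zero => rfl
  | succ n ih => rw [adEnd_pow_succ_apply, lie_mul_right, hc.lie_eq, zero_mul, zero_add, ih,
      adEnd_pow_succ_apply]

theorem adEnd_pow_succ_mul {a b : A} (h : Commute a ⁅a, b⁆) (n : ℕ) (y : A) :
    (adEnd a ^ (n + 1)) (b * y) =
      b * (adEnd a ^ (n + 1)) y + (n + 1) • (⁅a, b⁆ * (adEnd a ^ n) y) := by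
  induction n generalizing y with
  | zero => simp [adEnd_apply, lie_mul_right, add_comm]
  | succ n ih =>
    rw [adEnd_pow_succ_apply, lie_mul_right, map_add, adEnd_pow_mul_of_commute h, ih,
      ← adEnd_pow_succ_apply, ← adEnd_pow_succ_apply]
    simp only [add_smul, one_smul]
    abel

theorem adEnd_pow_pow_eq_zero {a b : A} (h : Commute a ⁅a, b⁆) {m k : ℕ} (hmk : m < k) :
    (adEnd a ^ k) (b ^ m) = 0 := by
  induction m generalizing k with
  | zero =>
    obtain ⟨k, rfl⟩ := Nat.exists_eq_add_of_lt hmk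
    simp [adEnd_pow_succ_apply, Ring.lie_def]
  | succ m ih =>
    obtain ⟨k, rfl⟩ := Nat.exists_eq_add_of_lt (Nat.zero_lt_of_lt hmk)
    rw [zero_add, pow_succ' b, adEnd_pow_succ_mul h, ih (by omega), ih (by omega)]
    simp

theorem adEnd_pow_pow_self {a b : A} (h : Commute a ⁅a, b⁆) (n : ℕ) :
    (adEnd a ^ n) (b ^ n) = n ! • ⁅a, b⁆ ^ n := by
  induction n with
  | zero => simp
  | succ n ih =>
    rw [pow_succ' b, adEnd_pow_succ_mul h, adEnd_pow_pow_eq_zero h n.lt_succ_self,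
      mul_zero, zero_add, ih, mul_smul_comm, smul_smul, ← pow_succ', Nat.factorial_succ]

theorem norm_adEnd_pow_apply_le {A : Type*} [NormedRing A] (a x : A) (n : ℕ) :
    ‖(adEnd a ^ n) x‖ ≤ (2 * ‖a‖) ^ n * ‖x‖ := by
  induction n generalizing x with
  | zero => simp
  | succ n ih =>
    rw [adEnd_pow_succ_apply]
    calc ‖(adEnd a ^ n) ⁅a, x⁆‖ ≤ (2 * ‖a‖) ^ n * ‖⁅a, x⁆‖ := ih _
      _ ≤ (2 * ‖a‖) ^ n * (2 * ‖a‖ * ‖x‖) := by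
          gcongr
          rw [Ring.lie_def]
          refine (norm_sub_le _ _).trans ?_
          nlinarith [norm_mul_le a x, norm_mul_le x a]
      _ = (2 * ‖a‖) ^ (n + 1) * ‖x‖ := by ring

/-- The Kleinecke–Shirokov estimate: `⁅a, b⁆` is quasinilpotent as soon as it commutes with `a`. -/
theorem factorial_mul_norm_lie_pow_le {𝕜 A : Type*} [RCLike 𝕜] [NormedRing A] [NormedAlgebra 𝕜 A]
    {a b : A} (h : Commute a ⁅a, b⁆) (n : ℕ) : n ! * ‖⁅a, b⁆ ^ n‖ ≤ (2 * ‖a‖) ^ n * ‖b ^ n‖ := by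
  calc (n ! : ℝ) * ‖⁅a, b⁆ ^ n‖ = ‖n ! • ⁅a, b⁆ ^ n‖ := by
        rw [← Nat.cast_smul_eq_nsmul 𝕜, norm_smul, RCLike.norm_natCast]
    _ ≤ (2 * ‖a‖) ^ n * ‖b ^ n‖ := by
        rw [← adEnd_pow_pow_self h]
        exact norm_adEnd_pow_apply_le a _ n

end KleineckeShirokov

theorem eq_zero_of_factorial_mul_pow_le {x K : ℝ} (hx : 0 ≤ x)
    (h : ∀ᶠ n in atTop, n ! * x ^ n ≤ K ^ n) : x = 0 := by
  by_contra hx0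
  have hxpos : 0 < x := lt_of_le_of_ne hx (Ne.symm hx0)
  have hsmall : ∀ᶠ n in atTop, (K / x) ^ n / n ! < 1 :=
    (FloorSemiring.tendsto_pow_div_factorial_atTop (K / x)).eventually (gt_mem_nhds one_pos)
  obtain ⟨n, hn, hlt⟩ := (h.and hsmall).exists
  rw [div_pow, div_div, div_lt_one (by positivity)] at hlt
  linarith

section QuasinilpotentCommutator

variable {𝕜 E : Type*} [RCLike 𝕜] [NormedAddCommGroup E] [NormedSpace 𝕜 E]

theorem ContinuousLinearMap.eq_zero_of_lie_apply_eq_smul {T A : E →L[𝕜] E}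
    (h : Commute T ⁅T, A⁆) {v : E} (hv : v ≠ 0) {c : 𝕜} (hc : ⁅T, A⁆ v = c • v) : c = 0 := by
  set C := ⁅T, A⁆
  have hpow (n : ℕ) : (C ^ n) v = c ^ n • v := by
    induction n with
    | zero => simp
    | succ n ih => rw [pow_succ, mul_apply_eq_comp, hc, map_smul, ih, smul_smul, ← pow_succ']
  have hle (n : ℕ) : ‖c‖ ^ n ≤ ‖C ^ n‖ := by
    have := (C ^ n).le_opNorm v
    rw [hpow, norm_smul, norm_pow] at this
    exact le_of_mul_le_mul_right this (norm_pos_iff.mpr hv)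
  refine norm_eq_zero.mp (eq_zero_of_factorial_mul_pow_le (K := 2 * ‖T‖ * ‖A‖) (norm_nonneg c) ?_)
  filter_upwards [eventually_gt_atTop 0] with n hn
  calc (n ! : ℝ) * ‖c‖ ^ n ≤ n ! * ‖C ^ n‖ := by gcongr; exact hle n
    _ ≤ (2 * ‖T‖) ^ n * ‖A ^ n‖ := factorial_mul_norm_lie_pow_le (𝕜 := 𝕜) h n
    _ ≤ (2 * ‖T‖) ^ n * ‖A‖ ^ n := by gcongr; exact norm_pow_le' A hn
    _ = (2 * ‖T‖ * ‖A‖) ^ n := by ring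

end QuasinilpotentCommutator

theorem Submodule.exists_eq_smul_of_finrank_eq_one {K V : Type*} [DivisionRing K] [AddCommGroup V]
    [Module K V] {p : Submodule K V} (hp : Module.finrank K p = 1) {v : V} (hv : v ∈ p)
    (hv0 : v ≠ 0) {x : V} (hx : x ∈ p) : ∃ c : K, x = c • v := by
  obtain ⟨c, hc⟩ := (finrank_eq_one_iff_of_nonzero' (⟨v, hv⟩ : p) (by simpa using hv0)).mp hp
    ⟨x, hx⟩
  exact ⟨c, by simpa using (congrArg Subtype.val hc).symm⟩

theorem Submodule.exists_mem_ne_zero_of_finrank_eq_one {K V : Type*} [DivisionRing K]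
    [AddCommGroup V] [Module K V] {p : Submodule K V} (hp : Module.finrank K p = 1) :
    ∃ v ∈ p, v ≠ 0 :=
  p.exists_mem_ne_zero_of_ne_bot (by rintro rfl; simp at hp)

theorem Submodule.eq_zero_of_finrank_eq_one_of_not_le_ker {K V V' : Type*} [Field K]
    [AddCommGroup V] [Module K V] [AddCommGroup V'] [Module K V'] {p : Submodule K V}
    (hp : Module.finrank K p = 1) {S : V →ₗ[K] V'} (hS : ¬p ≤ LinearMap.ker S) {y : V}
    (hy : y ∈ p) (hSy : S y = 0) : y = 0 := by
  obtain ⟨v, hv, hSv⟩ := SetLike.not_le_iff_exists.mp hS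
  obtain ⟨c, rfl⟩ := p.exists_eq_smul_of_finrank_eq_one hp hv (by rintro rfl; simp at hSv) hy
  rw [map_smul, smul_eq_zero] at hSy
  simp [hSy.resolve_right hSv]

theorem ContinuousLinearMap.hasRightInverse_of_surjective {𝕜 E F : Type*} [RCLike 𝕜]
    [NormedAddCommGroup E] [InnerProductSpace 𝕜 E] [CompleteSpace E]
    [NormedAddCommGroup F] [NormedSpace 𝕜 F] [CompleteSpace F]
    (f : E →L[𝕜] F) (hf : Function.Surjective f) : f.HasRightInverse := by
  let K := f.ker
  let e := f.equivProdOfSurjectiveOfIsCompl K.orthogonalProjectionOnto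
    (LinearMap.range_eq_top.mpr hf)
    (LinearMap.range_eq_top.mpr fun y => ⟨y, K.orthogonalProjectionOnto_mem_subspace_eq_self y⟩)
    (by rw [Submodule.ker_orthogonalProjectionOnto]; exact K.isCompl_orthogonal)
  exact ⟨(e.symm : F × K →L[𝕜] E) ∘L inl 𝕜 F K,
    fun y => congrArg Prod.fst (e.apply_symm_apply (y, 0))⟩

section EigenKer

variable {E F : Type*} [NormedAddCommGroup E] [NormedSpace ℂ E]
  [NormedAddCommGroup F] [NormedSpace ℂ F]

abbrev eigenKer (T : E →L[ℂ] E) (w : ℂ) : Submodule ℂ E :=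
  LinearMap.ker ((T - w • (1 : E →L[ℂ] E) : E →L[ℂ] E) : E →ₗ[ℂ] E)

theorem mem_eigenKer {T : E →L[ℂ] E} {w : ℂ} {x : E} : x ∈ eigenKer T w ↔ T x = w • x := by
  simp [sub_eq_zero]

theorem map_mem_eigenKer {T : E →L[ℂ] E} {T' : F →L[ℂ] F} {W : E →L[ℂ] F}
    (h : W ∘L T = T' ∘L W) {w : ℂ} {x : E} (hx : x ∈ eigenKer T w) : W x ∈ eigenKer T' w := by
  rw [mem_eigenKer] at hx ⊢
  rw [← comp_apply, ← h, comp_apply, hx, map_smul]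

/-- With `R` a right inverse of `T - w₀`, we have `T - z = (T - w₀) (1 - (z - w₀) R)`, so
`γ z = (1 - (z - w₀) R)⁻¹ γ₀` lies in `ker (T - z)` wherever the inverse exists. -/
theorem exists_analyticAt_mem_eigenKer [CompleteSpace E] {T : E →L[ℂ] E} {w₀ : ℂ}
    (hT : (T - w₀ • (1 : E →L[ℂ] E)).HasRightInverse) {γ₀ : E} (hγ₀ : γ₀ ∈ eigenKer T w₀)
    (hγ₀0 : γ₀ ≠ 0) :
    ∃ γ : ℂ → E, ∀ᶠ z in 𝓝 w₀, AnalyticAt ℂ γ z ∧ γ z ∈ eigenKer T z ∧ γ z ≠ 0 := by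
  obtain ⟨R, hR⟩ := hT
  let L : ℂ → E →L[ℂ] E := fun z => 1 - (z - w₀) • R
  have hL (z : ℂ) (x : E) : (T - w₀ • (1 : E →L[ℂ] E)) (L z x) = (T - z • (1 : E →L[ℂ] E)) x := by
    have := hR x
    simp only [L, sub_apply, smul_apply, one_apply_eq_self, map_sub, map_smul] at this ⊢
    rw [this]
    module
  have hunit : ∀ᶠ z in 𝓝 w₀, IsUnit (L z) := by
    have hcont : Continuous L := by fun_prop
    refine hcont.continuousAt.eventually (Units.isOpen.mem_nhds ?_)
    simp [L]
  refine ⟨fun z => Ring.inverse (L z) γ₀, hunit.mono fun z hz => ?_⟩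
  have hLγ : L z (Ring.inverse (L z) γ₀) = γ₀ := by
    rw [← mul_apply_eq_comp, Ring.mul_inverse_cancel _ hz, one_apply_eq_self]
  refine ⟨?_, ?_, fun h0 => hγ₀0 ?_⟩
  · have hinv := analyticAt_inverse (𝕜 := ℂ) hz.unit
    rw [hz.unit_spec] at hinv
    exact (apply ℂ E γ₀).analyticAt _ |>.comp (hinv.comp (by fun_prop))
  · rw [LinearMap.mem_ker, coe_coe, ← hL, hLγ]
    exact hγ₀
  · rw [← hLγ, show Ring.inverse (L z) γ₀ = 0 from h0, map_zero]

end EigenKer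

namespace CowenDouglas

variable {E F : Type*} [NormedAddCommGroup E] [InnerProductSpace ℂ E]
  [NormedAddCommGroup F] [NormedSpace ℂ F] {n : ℕ} {Ω : Set ℂ} {T : E →L[ℂ] E}

theorem eq_zero_of_eigenKer_le_ker (hT : CowenDouglas n Ω T) {G : E →L[ℂ] F}
    (h : ∀ w ∈ Ω, eigenKer T w ≤ G.ker) : G = 0 := by
  have hG := Submodule.topologicalClosure_minimal _ (iSup₂_le h) G.isClosed_ker
  rw [hT.2.2.1, top_le_iff] at hG
  ext x
  have hx : x ∈ G.ker := hG ▸ Submodule.mem_top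
  simpa using hx

/-- Near `w` the lines `ker (T - z)` are spanned by a holomorphic frame `γ`, and the identity
theorem applies to `G ∘ γ`. -/
theorem mem_interior_setOf_eigenKer_le_ker [CompleteSpace E] [CompleteSpace F]
    (hT : CowenDouglas 1 Ω T) (hΩ : IsOpen Ω) {w : ℂ} (hw : w ∈ Ω) {G : E →L[ℂ] F}
    (h : ∃ᶠ z in 𝓝[≠] w, eigenKer T z ≤ G.ker) :
    w ∈ interior {z | eigenKer T z ≤ G.ker} := by
  obtain ⟨γ₀, hγ₀, hγ₀0⟩ := Submodule.exists_mem_ne_zero_of_finrank_eq_one (hT.2.2.2 w hw)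
  obtain ⟨γ, hγ⟩ := exists_analyticAt_mem_eigenKer
    ((T - w • (1 : E →L[ℂ] E)).hasRightInverse_of_surjective (hT.2.1 w hw)) hγ₀ hγ₀0
  obtain ⟨r, hr, hball⟩ := Metric.eventually_nhds_iff_ball.mp (hγ.and (hΩ.eventually_mem hw))
  have hzero : EqOn (G ∘ γ) 0 (ball w r) := by
    refine AnalyticOnNhd.eqOn_zero_of_preconnected_of_frequently_eq_zero
      (fun z hz => G.analyticAt _ |>.comp (hball z hz).1.1) (convex_ball w r).isPreconnected
      (mem_ball_self hr) ?_
    refine (h.and_eventually (eventually_nhdsWithin_of_eventually_nhds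
      (isOpen_ball.mem_nhds (mem_ball_self hr)))).mono fun z ⟨hz, hzr⟩ => ?_
    exact hz (hball z hzr).1.2.1
  refine mem_interior.mpr ⟨ball w r, fun z hz x hx => ?_, isOpen_ball, mem_ball_self hr⟩
  obtain ⟨c, rfl⟩ := Submodule.exists_eq_smul_of_finrank_eq_one
    (hT.2.2.2 z (hball z hz).2) (hball z hz).1.2.1 (hball z hz).1.2.2 hx
  simp [map_smul, show G (γ z) = 0 from hzero hz]

theorem eq_zero_of_frequently_eigenKer_le_ker [CompleteSpace E] [CompleteSpace F]
    (hT : CowenDouglas 1 Ω T) (hΩ : IsOpen Ω) (hconn : IsPreconnected Ω) {w₀ : ℂ} (hw₀ : w₀ ∈ Ω)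
    {G : E →L[ℂ] F} (h : ∃ᶠ z in 𝓝[≠] w₀, eigenKer T z ≤ G.ker) : G = 0 := by
  set U := interior {z | eigenKer T z ≤ G.ker}
  have hΩU : Ω ⊆ U := by
    refine hconn.subset_of_closure_inter_subset isOpen_interior
      ⟨w₀, hw₀, hT.mem_interior_setOf_eigenKer_le_ker hΩ hw₀ h⟩ fun w ⟨hwU, hw⟩ => ?_
    by_cases hwU' : w ∈ U
    · exact hwU'
    refine hT.mem_interior_setOf_eigenKer_le_ker hΩ hw ?_
    have hfreq : ∃ᶠ z in 𝓝[≠] w, z ∈ U := by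
      rwa [← mem_closure_ne_iff_frequently_within, sdiff_singleton_eq_self hwU']
    exact hfreq.mono fun z hz => interior_subset hz
  exact hT.eq_zero_of_eigenKer_le_ker fun w hw => interior_subset (hΩU hw)

theorem eigenKer_le_ker_lie (hT : CowenDouglas 1 Ω T) {w : ℂ} (hw : w ∈ Ω)
    {A : E →L[ℂ] E} (h : Commute T ⁅T, A⁆) : eigenKer T w ≤ (⁅T, A⁆ : E →L[ℂ] E).ker := by
  set C := ⁅T, A⁆
  obtain ⟨γ, hγ, hγ0⟩ := Submodule.exists_mem_ne_zero_of_finrank_eq_one (hT.2.2.2 w hw)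
  have hCγ : C γ ∈ eigenKer T w := map_mem_eigenKer h.eq.symm hγ
  obtain ⟨c, hc⟩ := Submodule.exists_eq_smul_of_finrank_eq_one (hT.2.2.2 w hw) hγ hγ0 hCγ
  have hc0 : c = 0 := ContinuousLinearMap.eq_zero_of_lie_apply_eq_smul h hγ0 hc
  intro x hx
  obtain ⟨d, rfl⟩ := Submodule.exists_eq_smul_of_finrank_eq_one (hT.2.2.2 w hw) hγ hγ0 hx
  simp [map_smul, hc, hc0]

variable {H₀ H₁ : Type*} [NormedAddCommGroup H₀] [InnerProductSpace ℂ H₀] [CompleteSpace H₀]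
  [NormedAddCommGroup H₁] [InnerProductSpace ℂ H₁] [CompleteSpace H₁]

theorem intertwiner_eq_zero {T₀ : H₀ →L[ℂ] H₀} {T₁ : H₁ →L[ℂ] H₁}
    (h₀ : CowenDouglas 1 Ω T₀) (h₁ : CowenDouglas 1 Ω T₁) (hΩ : IsOpen Ω) (hconn : IsConnected Ω)
    {S : H₁ →L[ℂ] H₀} (hS : S ≠ 0) (hint : T₀ ∘L S = S ∘L T₁) {A : H₀ →L[ℂ] H₀}
    {W : H₀ →L[ℂ] H₁} (hA : A ∘L T₀ = T₀ ∘L A + S ∘L W) (hW : W ∘L T₀ = T₁ ∘L W) : W = 0 := by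
  have hlie : ⁅T₀, A⁆ = -(S ∘L W) := by
    rw [Ring.lie_def, mul_def, mul_def, hA]
    abel
  have hcomm : Commute T₀ ⁅T₀, A⁆ := by
    rw [hlie, Commute, SemiconjBy, mul_def, mul_def, comp_neg, neg_comp, ← comp_assoc, hint,
      comp_assoc, ← hW, comp_assoc]
  have hSW : S ∘L W = 0 := by
    rw [← neg_eq_zero, ← hlie]
    exact h₀.eq_zero_of_eigenKer_le_ker fun w hw => h₀.eigenKer_le_ker_lie hw hcomm
  obtain ⟨w₀, hw₀⟩ := hconn.nonempty
  have hSfreq : ∃ᶠ z in 𝓝[≠] w₀, ¬eigenKer T₁ z ≤ S.ker := fun hev =>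
    hS (h₁.eq_zero_of_frequently_eigenKer_le_ker hΩ hconn.isPreconnected hw₀
      (hev.mono fun _ => not_not.mp).frequently)
  refine h₀.eq_zero_of_frequently_eigenKer_le_ker hΩ hconn.isPreconnected hw₀
    ((hSfreq.and_eventually (eventually_nhdsWithin_of_eventually_nhds
      (hΩ.eventually_mem hw₀))).mono fun z ⟨hz, hzΩ⟩ x hx => ?_)
  refine Submodule.eq_zero_of_finrank_eq_one_of_not_le_ker (h₁.2.2.2 z hzΩ) hz
    (map_mem_eigenKer hW hx) ?_
  simpa using congrArg (· x) hSW

end CowenDouglas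

section UnitEquiv

variable {H H' : Type*} [NormedAddCommGroup H] [InnerProductSpace ℂ H]
  [NormedAddCommGroup H'] [InnerProductSpace ℂ H'] {A : H →L[ℂ] H} {B : H' →L[ℂ] H'}

theorem LinearIsometryEquiv.symm_intertwines {U : H ≃ₗᵢ[ℂ] H'} (hU : ∀ x, U (A x) = B (U x))
    (x : H') : U.symm (B x) = A (U.symm x) :=
  U.injective (by rw [U.apply_symm_apply, hU, U.apply_symm_apply])

theorem UnitEquiv.symm (h : UnitEquiv A B) : UnitEquiv B A :=
  let ⟨U, hU⟩ := h
  ⟨U.symm, U.symm_intertwines hU⟩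

end UnitEquiv

section BlockOperator

variable {H₀ H₁ : Type*} [NormedAddCommGroup H₀] [NormedSpace ℂ H₀] [NormedAddCommGroup H₁]
  [NormedSpace ℂ H₁] (T₀ : H₀ →L[ℂ] H₀) (S : H₁ →L[ℂ] H₀) (T₁ : H₁ →L[ℂ] H₁)

@[simp]
theorem blockOp₂_fst (ξ : WithLp 2 (H₀ × H₁)) : (blockOp₂ T₀ S T₁ ξ).fst = T₀ ξ.fst + S ξ.snd :=
  rfl

@[simp]
theorem blockOp₂_snd (ξ : WithLp 2 (H₀ × H₁)) : (blockOp₂ T₀ S T₁ ξ).snd = T₁ ξ.snd := rfl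

@[simp]
theorem blockOp₂_toLp (x : H₀) (y : H₁) :
    blockOp₂ T₀ S T₁ (WithLp.toLp 2 (x, y)) = WithLp.toLp 2 (T₀ x + S y, T₁ y) := rfl

end BlockOperator

section Orthogonal

variable {H₀ H₁ : Type*} [NormedAddCommGroup H₀] [InnerProductSpace ℂ H₀]
  [NormedAddCommGroup H₁] [InnerProductSpace ℂ H₁]

/-- `U` maps `H₀ ⊕ 0` onto itself, hence preserves its orthogonal complement `0 ⊕ H₁`. -/
theorem fst_apply_inr_eq_zero (U : WithLp 2 (H₀ × H₁) ≃ₗᵢ[ℂ] WithLp 2 (H₀ × H₁))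
    (hU' : ∀ x, (U.symm (WithLp.toLp 2 (x, 0))).snd = 0) (y : H₁) :
    (U (WithLp.toLp 2 (0, y))).fst = 0 := by
  set z := (U (WithLp.toLp 2 (0, y))).fst
  set x := (U.symm (WithLp.toLp 2 (z, 0))).fst
  have hx : WithLp.toLp 2 (x, (0 : H₁)) = U.symm (WithLp.toLp 2 (z, 0)) := by
    conv_lhs => rw [← hU' z]
    rfl
  have := U.inner_map_map (WithLp.toLp 2 (0, y)) (WithLp.toLp 2 (x, 0))
  rw [hx, U.apply_symm_apply, WithLp.prod_inner_apply, WithLp.prod_inner_apply] at this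
  simp [hU' z] at this
  exact inner_self_eq_zero.mp this

theorem norm_fst_apply_inl (U : WithLp 2 (H₀ × H₁) ≃ₗᵢ[ℂ] WithLp 2 (H₀ × H₁)) {x : H₀}
    (hx : (U (WithLp.toLp 2 (x, 0))).snd = 0) : ‖(U (WithLp.toLp 2 (x, 0))).fst‖ = ‖x‖ := by
  have := U.norm_map (WithLp.toLp 2 (x, 0))
  rw [WithLp.prod_norm_eq_of_L2, hx] at this
  simpa using this

theorem opNorm_le_of_intertwines {T₀ : H₀ →L[ℂ] H₀} {T₁ : H₁ →L[ℂ] H₁} {S₁ S₂ : H₁ →L[ℂ] H₀}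
    (U : WithLp 2 (H₀ × H₁) ≃ₗᵢ[ℂ] WithLp 2 (H₀ × H₁))
    (hU : ∀ ξ, U (blockOp₂ T₀ S₁ T₁ ξ) = blockOp₂ T₀ S₂ T₁ (U ξ))
    (hW : ∀ x, (U (WithLp.toLp 2 (x, 0))).snd = 0)
    (hW' : ∀ x, (U.symm (WithLp.toLp 2 (x, 0))).snd = 0) : ‖S₁‖ ≤ ‖S₂‖ := by
  refine S₁.opNorm_le_bound (norm_nonneg _) fun y => ?_
  set ξ := U (WithLp.toLp 2 (0, y))
  have hsplit : WithLp.toLp 2 (S₁ y, T₁ y) = WithLp.toLp 2 (S₁ y, 0) + WithLp.toLp 2 (0, T₁ y) := by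
    rw [← WithLp.toLp_add]
    simp
  have hfst : (U (WithLp.toLp 2 (S₁ y, 0))).fst = S₂ ξ.snd := by
    have := congrArg WithLp.fst (hU (WithLp.toLp 2 (0, y)))
    rwa [blockOp₂_toLp, map_zero, zero_add, hsplit, map_add, WithLp.add_fst,
      fst_apply_inr_eq_zero U hW', add_zero, blockOp₂_fst, fst_apply_inr_eq_zero U hW',
      map_zero, zero_add] at this
  calc ‖S₁ y‖ = ‖S₂ ξ.snd‖ := by rw [← hfst, norm_fst_apply_inl U (hW _)]
    _ ≤ ‖S₂‖ * ‖ξ.snd‖ := S₂.le_opNorm _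
    _ ≤ ‖S₂‖ * ‖y‖ := by
      gcongr
      simpa [ξ] using WithLp.norm_snd_le _ ξ

end Orthogonal

section Intertwining

variable {H₀ H₁ : Type*} [NormedAddCommGroup H₀] [InnerProductSpace ℂ H₀] [CompleteSpace H₀]
  [NormedAddCommGroup H₁] [InnerProductSpace ℂ H₁] [CompleteSpace H₁]
  {Ω : Set ℂ} {T₀ : H₀ →L[ℂ] H₀} {T₁ : H₁ →L[ℂ] H₁} {S : H₁ →L[ℂ] H₀}

theorem snd_apply_inl_eq_zero_of_intertwines (h₀ : CowenDouglas 1 Ω T₀)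
    (h₁ : CowenDouglas 1 Ω T₁) (hΩ : IsOpen Ω) (hconn : IsConnected Ω) (hS : S ≠ 0)
    (hint : T₀ ∘L S = S ∘L T₁) {S' : H₁ →L[ℂ] H₀} (U : WithLp 2 (H₀ × H₁) →L[ℂ] WithLp 2 (H₀ × H₁))
    (hU : ∀ ξ, U (blockOp₂ T₀ S' T₁ ξ) = blockOp₂ T₀ S T₁ (U ξ)) (x : H₀) :
    (U (WithLp.toLp 2 (x, 0))).snd = 0 := by
  let ι : H₀ →L[ℂ] WithLp 2 (H₀ × H₁) :=
    ((WithLp.prodContinuousLinearEquiv 2 ℂ H₀ H₁).symm : H₀ × H₁ →L[ℂ] _) ∘L inl ℂ H₀ H₁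
  have hUι (x : H₀) : U (ι (T₀ x)) = blockOp₂ T₀ S T₁ (U (ι x)) := by
    rw [← hU]
    simp [ι]
  -- the first column of the block matrix of `U`
  let A := WithLp.fstL 2 ℂ H₀ H₁ ∘L U ∘L ι
  let W := WithLp.sndL 2 ℂ H₀ H₁ ∘L U ∘L ι
  have hW : W = 0 := CowenDouglas.intertwiner_eq_zero h₀ h₁ hΩ hconn hS hint (A := A)
    (by ext x; simp [A, W, hUι]) (by ext x; simp [W, hUι])
  exact congrArg (· x) hW

theorem le_of_unitEquiv_blockOp₂ (hΩ : IsOpen Ω) (hconn : IsConnected Ω)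
    (h₀ : CowenDouglas 1 Ω T₀) (h₁ : CowenDouglas 1 Ω T₁) (hS : S ≠ 0) (hint : T₀ ∘L S = S ∘L T₁)
    {μ μ' : ℝ} (hμ : 0 < μ) (hμ' : 0 < μ')
    (h : UnitEquiv (blockOp₂ T₀ ((μ : ℂ) • S) T₁) (blockOp₂ T₀ ((μ' : ℂ) • S) T₁)) :
    μ ≤ μ' := by
  have hscaled {c : ℝ} (hc : 0 < c) : (c : ℂ) • S ≠ 0 ∧ T₀ ∘L ((c : ℂ) • S) = ((c : ℂ) • S) ∘L T₁ :=
    ⟨smul_ne_zero (by exact_mod_cast hc.ne') hS, by rw [comp_smul, smul_comp, hint]⟩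
  obtain ⟨U, hU⟩ := h
  have hnorm := opNorm_le_of_intertwines U hU
    (snd_apply_inl_eq_zero_of_intertwines h₀ h₁ hΩ hconn (hscaled hμ').1 (hscaled hμ').2
      (U : WithLp 2 (H₀ × H₁) →L[ℂ] _) hU)
    (snd_apply_inl_eq_zero_of_intertwines h₀ h₁ hΩ hconn (hscaled hμ).1 (hscaled hμ).2
      (U.symm : WithLp 2 (H₀ × H₁) →L[ℂ] _) (U.symm_intertwines hU))
  rw [norm_smul, norm_smul, Complex.norm_real, Complex.norm_real, Real.norm_of_nonneg hμ.le,
    Real.norm_of_nonneg hμ'.le] at hnorm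
  exact le_of_mul_le_mul_right hnorm (norm_pos_iff.mpr hS)

end Intertwining

theorem statement6_general
    {H₀ H₁ : Type*}
    [NormedAddCommGroup H₀] [InnerProductSpace ℂ H₀] [CompleteSpace H₀]
    [NormedAddCommGroup H₁] [InnerProductSpace ℂ H₁] [CompleteSpace H₁]
    (Ω : Set ℂ) (hΩopen : IsOpen Ω) (hΩconn : IsConnected Ω)
    (T₀ : H₀ →L[ℂ] H₀) (T₁ : H₁ →L[ℂ] H₁) (S : H₁ →L[ℂ] H₀)
    (h₀ : CowenDouglas 1 Ω T₀) (h₁ : CowenDouglas 1 Ω T₁)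
    (hS : S ≠ 0) (hint : T₀ ∘L S = S ∘L T₁)
    (μ μ' : ℝ) (hμ : 0 < μ) (hμ' : 0 < μ') :
    UnitEquiv (blockOp₂ T₀ ((μ : ℂ) • S) T₁) (blockOp₂ T₀ ((μ' : ℂ) • S) T₁) ↔
      μ = μ' := by
  refine ⟨fun h => le_antisymm ?_ ?_, ?_⟩
  · exact le_of_unitEquiv_blockOp₂ hΩopen hΩconn h₀ h₁ hS hint hμ hμ' h
  · exact le_of_unitEquiv_blockOp₂ hΩopen hΩconn h₀ h₁ hS hint hμ' hμ h.symm
  · rintro rfl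
    exact ⟨LinearIsometryEquiv.refl ℂ _, fun _ => rfl⟩

/-- For a nonzero intertwiner `S` and positive reals `μ, μ̃`, the operators
`[[T₀, μS], [0, T₁]]` and `[[T₀, μ̃S], [0, T₁]]` are unitarily equivalent iff `μ = μ̃`. -/
theorem statement6
    {H₀ H₁ : Type*}
    [NormedAddCommGroup H₀] [InnerProductSpace ℂ H₀] [CompleteSpace H₀]
    [TopologicalSpace.SeparableSpace H₀]
    [NormedAddCommGroup H₁] [InnerProductSpace ℂ H₁] [CompleteSpace H₁]
    [TopologicalSpace.SeparableSpace H₁]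
    (Ω : Set ℂ) (hΩopen : IsOpen Ω) (hΩconn : IsConnected Ω)
    (T₀ : H₀ →L[ℂ] H₀) (T₁ : H₁ →L[ℂ] H₁) (S : H₁ →L[ℂ] H₀)
    (h₀ : CowenDouglas 1 Ω T₀) (h₁ : CowenDouglas 1 Ω T₁)
    (hS : S ≠ 0) (hint : T₀ ∘L S = S ∘L T₁)
    (μ μ' : ℝ) (hμ : 0 < μ) (hμ' : 0 < μ') :
    UnitEquiv (blockOp₂ T₀ ((μ : ℂ) • S) T₁) (blockOp₂ T₀ ((μ' : ℂ) • S) T₁) ↔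
      μ = μ' :=
  statement6_general Ω hΩopen hΩconn T₀ T₁ S h₀ h₁ hS hint μ μ' hμ hμ'
end
end

section
/- Let Ω be a connected open subset of ℂ and let T_0 be an operator in B_1(Ω) on a complex separable Hilbert space H_0. Then the operator T = [[T_0, I],[0, T_0]] acting on H_0 ⊕ H_0 (where I is the identity on H_0) is strongly irreducible; that is, the only idempotent operators commuting with T are 0 and the identity. -/
noncomputable section

open ContinuousLinearMap
open scoped InnerProductSpace

/-!
Write an idempotent `P` commuting with `T = [[T₀, 1], [0, T₀]]` as `[[A, B], [C, D]]`. Commutation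
with `T` says `C = A T₀ - T₀ A` commutes with `T₀`, and then `D - A = B T₀ - T₀ B` commutes with
`T₀` as well. By the Kleinecke–Shirokov theorem both are quasinilpotent. An operator commuting with
`T₀ ∈ B₁(Ω)` preserves the lines `ker (T₀ - w)`, so it acts on each of them by a scalar of its
spectrum; since these lines span a dense subspace, quasinilpotent operators commuting with `T₀`
vanish. Hence `C = 0` and `D = A`, so `A` is an idempotent commuting with `T₀`, and `AB + BA = B`.

An idempotent commuting with `T₀` acts on each `ker (T₀ - w)` as `0` or as `1`. If `S` is a right
inverse of `T₀ - w₀`, then `(1 - (w - w₀) S)⁻¹ e₀` is an eigenvector for `w` depending continuously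
on `w` near `w₀`, so the set of `w` where each alternative holds is open; by connectedness one of
them holds on all of `Ω`, and by density `A = 0` or `A = 1`. Then `B = 0` and `P ∈ {0, 1}`.
-/

open Filter Topology

section KleineckeShirokov

variable (𝕜 : Type*) {A : Type*} [RCLike 𝕜] [NormedRing A] [NormedAlgebra 𝕜 A]

def commutatorMap (t : A) : A →ₗ[𝕜] A := LinearMap.mulRight 𝕜 t - LinearMap.mulLeft 𝕜 t

variable {𝕜}

@[simp]
lemma commutatorMap_apply (t x : A) : commutatorMap 𝕜 t x = x * t - t * x := rfl

lemma commutatorMap_mul (t x y : A) :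
    commutatorMap 𝕜 t (x * y) = x * commutatorMap 𝕜 t y + commutatorMap 𝕜 t x * y := by
  simp only [commutatorMap_apply]
  noncomm_ring

lemma norm_commutatorMap_pow_apply_le (t x : A) (n : ℕ) :
    ‖(commutatorMap 𝕜 t ^ n) x‖ ≤ (2 * ‖t‖) ^ n * ‖x‖ := by
  induction n generalizing x with
  | zero => simp
  | succ n ih =>
    rw [pow_succ, Module.End.mul_apply]
    calc ‖(commutatorMap 𝕜 t ^ n) (commutatorMap 𝕜 t x)‖
        ≤ (2 * ‖t‖) ^ n * ‖x * t - t * x‖ := ih _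
      _ ≤ (2 * ‖t‖) ^ n * (‖x‖ * ‖t‖ + ‖t‖ * ‖x‖) := by
        gcongr
        exact (norm_sub_le _ _).trans (add_le_add (norm_mul_le _ _) (norm_mul_le _ _))
      _ = (2 * ‖t‖) ^ (n + 1) * ‖x‖ := by ring

variable {a t : A}

lemma commutatorMap_pow_succ_apply_mul (ha : Commute (a * t - t * a) t) (n : ℕ) (y : A) :
    (commutatorMap 𝕜 t ^ (n + 1)) (a * y) = a * (commutatorMap 𝕜 t ^ (n + 1)) y +
      (n + 1 : 𝕜) • ((a * t - t * a) * (commutatorMap 𝕜 t ^ n) y) := by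
  have hc : commutatorMap 𝕜 t (a * t - t * a) = 0 := by simp [ha.eq]
  induction n with
  | zero => simpa using commutatorMap_mul (𝕜 := 𝕜) t a y
  | succ n ih =>
    rw [pow_succ', Module.End.mul_apply, ih, map_add, map_smul, commutatorMap_mul,
      commutatorMap_mul, hc, zero_mul, add_zero, ← Module.End.mul_apply, ← pow_succ',
      ← Module.End.mul_apply, ← pow_succ', commutatorMap_apply, Nat.cast_succ]
    module

lemma commutatorMap_pow_apply_pow (ha : Commute (a * t - t * a) t) (n : ℕ) :
    (commutatorMap 𝕜 t ^ n) (a ^ n) = (n.factorial : 𝕜) • (a * t - t * a) ^ n := by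
  induction n with
  | zero => simp
  | succ n ih =>
    have hc : commutatorMap 𝕜 t ((a * t - t * a) ^ n) = 0 := by
      simp [(ha.pow_left n).eq]
    rw [pow_succ' a, commutatorMap_pow_succ_apply_mul ha, pow_succ', Module.End.mul_apply, ih,
      map_smul, hc, smul_zero, mul_zero, zero_add, mul_smul_comm, smul_smul, ← pow_succ',
      Nat.factorial_succ]
    push_cast
    ring_nf

/-- Kleinecke–Shirokov: with `δ x = x t - t x` and `c = δ a`, `δⁿ (aⁿ) = n! cⁿ`, so
`n! ‖cⁿ‖ ≤ (2 ‖t‖ ‖a‖)ⁿ`, which is incompatible with `‖μ‖ⁿ ≤ ‖cⁿ‖` for a nonzero `μ ∈ σ(c)`. -/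
theorem spectrum_subset_zero_of_commute_commutator [CompleteSpace A] [NormOneClass A]
    (ha : Commute (a * t - t * a) t) : spectrum 𝕜 (a * t - t * a) ⊆ {0} := by
  intro μ hμ
  by_contra hμ0
  have hμpos : 0 < ‖μ‖ := norm_pos_iff.2 hμ0
  set r := 2 * ‖t‖ * ‖a‖ / ‖μ‖
  have hle : ∀ n : ℕ, 1 ≤ r ^ n / n.factorial := by
    intro n
    have hspec : ‖μ‖ ^ n ≤ ‖(a * t - t * a) ^ n‖ := by
      simpa using spectrum.norm_le_norm_of_mem (spectrum.pow_mem_pow _ n hμ)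
    have hnorm := norm_commutatorMap_pow_apply_le (𝕜 := 𝕜) t (a ^ n) n
    rw [commutatorMap_pow_apply_pow ha, norm_smul, RCLike.norm_natCast] at hnorm
    rw [le_div_iff₀ (by positivity), one_mul, div_pow, le_div_iff₀ (by positivity)]
    calc (n.factorial : ℝ) * ‖μ‖ ^ n ≤ n.factorial * ‖(a * t - t * a) ^ n‖ := by gcongr
      _ ≤ (2 * ‖t‖) ^ n * ‖a ^ n‖ := hnorm
      _ ≤ (2 * ‖t‖) ^ n * ‖a‖ ^ n := by gcongr; exact norm_pow_le a n
      _ = (2 * ‖t‖ * ‖a‖) ^ n := by ring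
  obtain ⟨n, hn⟩ :=
    ((FloorSemiring.tendsto_pow_div_factorial_atTop r).eventually_lt_const one_pos).exists
  exact (hle n).not_gt hn

end KleineckeShirokov

theorem Matrix.eq_zero_or_eq_one_of_commute_jordan {R : Type*} [Ring R] {t : R}
    (hcomm : ∀ a : R, Commute (a * t - t * a) t → a * t - t * a = 0)
    (hidem : ∀ p : R, IsIdempotentElem p → Commute p t → p = 0 ∨ p = 1)
    {M : Matrix (Fin 2) (Fin 2) R} (hM : IsIdempotentElem M) (hMt : Commute M !![t, 1; 0, t]) :
    M = 0 ∨ M = 1 := by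
  obtain ⟨A, B, C, D, rfl⟩ : ∃ A B C D : R, M = !![A, B; C, D] :=
    ⟨_, _, _, _, Matrix.eta_fin_two M⟩
  simp only [IsIdempotentElem, Commute, SemiconjBy, Matrix.mul_fin_two,
    EmbeddingLike.apply_eq_iff_eq, vecCons_inj, and_true, mul_zero, add_zero, mul_one, one_mul,
    zero_mul, zero_add] at hM hMt
  obtain ⟨⟨hAA, hAB⟩, -, -⟩ := hM
  obtain ⟨⟨hAt, hBt⟩, hCt, hDt⟩ := hMt
  obtain rfl : C = 0 := by
    have hCA : A * t - t * A = C := by rw [hAt]; abel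
    rw [← hCA]
    exact hcomm A (by rw [hCA]; exact hCt)
  obtain rfl : D = A := by
    have hBD : B * t - t * B = D - A := by rw [sub_eq_sub_iff_add_eq_add, add_comm, hBt, add_comm]
    rw [← sub_eq_zero, ← hBD]
    refine hcomm B (hBD ▸ ?_)
    rw [zero_add] at hDt
    rw [add_zero] at hAt
    exact Commute.sub_left hDt hAt
  rw [mul_zero, add_zero] at hAA
  rw [add_zero] at hAt
  rcases hidem D hAA hAt with rfl | rfl
  · left
    obtain rfl : B = 0 := by simpa using hAB.symm
    exact (Matrix.eta_fin_two 0).symm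
  · right
    obtain rfl : B = 0 := by simpa using hAB
    simp [Matrix.one_fin_two]

section Blocks

variable {𝕜 H : Type*} [NontriviallyNormedField 𝕜] [NormedAddCommGroup H] [NormedSpace 𝕜 H]

lemma WithLp.toLp_prod_eq_add (x y : H) :
    WithLp.toLp 2 (x, y) = WithLp.toLp 2 (x, 0) + WithLp.toLp 2 (0, y) := by
  rw [← WithLp.toLp_add, Prod.mk_add_mk, add_zero, zero_add]

variable (𝕜 H) in
def blockMatrix :
    (WithLp 2 (H × H) →L[𝕜] WithLp 2 (H × H)) →+* Matrix (Fin 2) (Fin 2) (H →L[𝕜] H) where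
  toFun P := Matrix.of fun i j => ![fst 𝕜 H H, snd 𝕜 H H] i ∘L
    (WithLp.prodContinuousLinearEquiv 2 𝕜 H H : WithLp 2 (H × H) →L[𝕜] H × H) ∘L P ∘L
    ((WithLp.prodContinuousLinearEquiv 2 𝕜 H H).symm : H × H →L[𝕜] WithLp 2 (H × H)) ∘L
    ![inl 𝕜 H H, inr 𝕜 H H] j
  map_one' := by
    ext i j x
    fin_cases i <;> fin_cases j <;> simp
  map_zero' := by
    ext i j x
    fin_cases i <;> fin_cases j <;> simp
  map_add' P Q := by
    ext i j x
    fin_cases i <;> fin_cases j <;> simp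
  map_mul' P Q := by
    ext i j x
    fin_cases i <;> fin_cases j <;>
      simp [Matrix.mul_apply, Fin.sum_univ_two, ← WithLp.add_fst, ← WithLp.add_snd, ← map_add,
        ← WithLp.toLp_prod_eq_add] <;> rfl

lemma apply_toLp_eq_blockMatrix (P : WithLp 2 (H × H) →L[𝕜] WithLp 2 (H × H)) (x y : H) :
    P (WithLp.toLp 2 (x, y)) = WithLp.toLp 2 (blockMatrix 𝕜 H P 0 0 x + blockMatrix 𝕜 H P 0 1 y,
      blockMatrix 𝕜 H P 1 0 x + blockMatrix 𝕜 H P 1 1 y) := by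
  rw [WithLp.toLp_prod_eq_add, map_add]
  rfl

lemma blockMatrix_injective : Function.Injective (blockMatrix 𝕜 H) := by
  intro P Q h
  ext1 z
  obtain ⟨⟨x, y⟩, rfl⟩ : ∃ p, z = WithLp.toLp 2 p := ⟨_, (WithLp.toLp_ofLp 2 z).symm⟩
  rw [apply_toLp_eq_blockMatrix, apply_toLp_eq_blockMatrix, h]

end Blocks

lemma blockMatrix_blockOp₂ {H : Type*} [NormedAddCommGroup H] [NormedSpace ℂ H]
    (T₀ S T₁ : H →L[ℂ] H) : blockMatrix ℂ H (blockOp₂ T₀ S T₁) = !![T₀, S; 0, T₁] := by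
  ext i j x
  fin_cases i <;> fin_cases j <;> simp [blockMatrix, blockOp₂]

lemma ContinuousLinearMap.mem_ker_sub_smul_one_iff {𝕜 E : Type*} [NontriviallyNormedField 𝕜]
    [NormedAddCommGroup E] [NormedSpace 𝕜 E] {T : E →L[𝕜] E} {w : 𝕜} {x : E} :
    x ∈ LinearMap.ker ((T - w • (1 : E →L[𝕜] E) : E →L[𝕜] E) : E →ₗ[𝕜] E) ↔ T x = w • x := by
  simp [sub_eq_zero]

lemma ContinuousLinearMap.mem_spectrum_of_apply_eq_smul {𝕜 E : Type*} [NontriviallyNormedField 𝕜]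
    [NormedAddCommGroup E] [NormedSpace 𝕜 E] {X : E →L[𝕜] E} {x : E} {c : 𝕜} (hx : x ≠ 0)
    (h : X x = c • x) : c ∈ spectrum 𝕜 X := by
  rintro ⟨u, hu⟩
  have hux : (u : E →L[𝕜] E) x = 0 := by simp [hu, Algebra.algebraMap_eq_smul_one, h]
  have := congr((↑u⁻¹ : E →L[𝕜] E) $hux)
  rw [← mul_apply_eq_comp, Units.inv_mul, one_apply_eq_self,
    map_zero] at this
  exact hx this

lemma ContinuousLinearMap.HasRightInverse.of_surjective {𝕜 E F : Type*} [RCLike 𝕜]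
    [NormedAddCommGroup E] [InnerProductSpace 𝕜 E] [CompleteSpace E]
    [NormedAddCommGroup F] [NormedSpace 𝕜 F] [CompleteSpace F]
    {f : E →L[𝕜] F} (hf : Function.Surjective f) : f.HasRightInverse := by
  set K := f.ker
  have : CompleteSpace K := f.isClosed_ker.completeSpace_coe
  let e := f.equivProdOfSurjectiveOfIsCompl K.orthogonalProjectionOnto (LinearMap.range_eq_top.2 hf)
    (LinearMap.range_eq_top.2 fun v => ⟨v, K.orthogonalProjectionOnto_mem_subspace_eq_self v⟩)
    (by rw [Submodule.ker_orthogonalProjectionOnto]; exact K.isCompl_orthogonal)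
  exact ⟨(e.symm : F × K →L[𝕜] E) ∘L inl 𝕜 F K,
    fun y => congrArg Prod.fst (e.apply_symm_apply (y, 0))⟩

lemma exists_tendsto_eigenvector {𝕜 E : Type*} [NontriviallyNormedField 𝕜]
    [NormedAddCommGroup E] [NormedSpace 𝕜 E] [CompleteSpace E] {T : E →L[𝕜] E} {w₀ : 𝕜}
    (hT : (T - w₀ • (1 : E →L[𝕜] E)).HasRightInverse) {e₀ : E} (he₀ : T e₀ = w₀ • e₀) :
    ∃ u : 𝕜 → E, Tendsto u (𝓝 w₀) (𝓝 e₀) ∧ ∀ᶠ w in 𝓝 w₀, T (u w) = w • u w := by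
  obtain ⟨S, hS⟩ := hT
  set R : 𝕜 → E →L[𝕜] E := fun w => 1 - (w - w₀) • S
  have hR : Tendsto R (𝓝 w₀) (𝓝 1) := by
    have : Continuous R := by fun_prop
    simpa [R] using this.tendsto w₀
  refine ⟨fun w => Ring.inverse (R w) e₀, ?_, ?_⟩
  · have := ((apply 𝕜 E e₀).continuous.tendsto _).comp
      ((NormedRing.inverse_continuousAt (1 : (E →L[𝕜] E)ˣ)).tendsto.comp hR)
    simpa [Function.comp_def] using this
  · filter_upwards [hR.eventually (Units.isOpen.mem_nhds isUnit_one)] with w hw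
    set u := Ring.inverse (R w) e₀
    have hu : u - (w - w₀) • S u = e₀ := by
      simpa [R, u] using congr($(Ring.mul_inverse_cancel _ hw) e₀)
    have hTu : (T - w₀ • (1 : E →L[𝕜] E)) u = (w - w₀) • u := by
      calc (T - w₀ • (1 : E →L[𝕜] E)) u = (T - w₀ • (1 : E →L[𝕜] E)) (e₀ + (w - w₀) • S u) := by
            rw [← hu, sub_add_cancel]
        _ = (w - w₀) • u := by
          rw [map_add, map_smul, hS u, sub_apply, smul_apply, one_apply_eq_self,
            he₀, sub_self, zero_add]
    simpa [sub_smul] using hTu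

namespace CowenDouglas

variable {H : Type*} [NormedAddCommGroup H] [InnerProductSpace ℂ H] {n : ℕ} {Ω : Set ℂ}
  {T : H →L[ℂ] H} {w : ℂ}

lemma exists_eigenvector_ne_zero (hT : CowenDouglas n Ω T) (hn : n ≠ 0) (hw : w ∈ Ω) :
    ∃ e ≠ 0, T e = w • e := by
  have hker : (T - w • (1 : H →L[ℂ] H)).ker ≠ ⊥ := fun h =>
    hn (by rw [← hT.2.2.2 w hw, h, finrank_bot])
  obtain ⟨e, he, he0⟩ := Submodule.exists_mem_ne_zero_of_ne_bot hker
  exact ⟨e, he0, mem_ker_sub_smul_one_iff.1 he⟩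

lemma exists_smul_eq_of_eigenvector (hT : CowenDouglas 1 Ω T) (hw : w ∈ Ω) {e x : H}
    (he0 : e ≠ 0) (he : T e = w • e) (hx : T x = w • x) : ∃ c : ℂ, c • e = x := by
  obtain ⟨c, hc⟩ := (finrank_eq_one_iff_of_nonzero' (⟨e, mem_ker_sub_smul_one_iff.2 he⟩ :
    (T - w • (1 : H →L[ℂ] H)).ker) fun h => he0 (congrArg Subtype.val h)).1 (hT.2.2.2 w hw)
    ⟨x, mem_ker_sub_smul_one_iff.2 hx⟩
  exact ⟨c, congrArg Subtype.val hc⟩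

lemma ext (hT : CowenDouglas n Ω T) {X Y : H →L[ℂ] H}
    (h : ∀ w ∈ Ω, ∀ x, T x = w • x → X x = Y x) : X = Y := by
  have hle : ⨆ w ∈ Ω, (T - w • (1 : H →L[ℂ] H)).ker ≤ (X - Y).ker :=
    iSup₂_le fun w hw x hx => by
      simp [h w hw x (mem_ker_sub_smul_one_iff.1 hx)]
  have htop := Submodule.topologicalClosure_minimal _ hle (X - Y).isClosed_ker
  rw [hT.2.2.1, top_le_iff] at htop
  ext x
  have hx : x ∈ (X - Y).ker := htop ▸ Submodule.mem_top
  simpa [sub_eq_zero] using hx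

lemma exists_forall_eigenvector_apply_eq_smul (hT : CowenDouglas 1 Ω T) {X : H →L[ℂ] H}
    (hX : Commute X T) (hw : w ∈ Ω) : ∃ c : ℂ, ∀ x, T x = w • x → X x = c • x := by
  obtain ⟨e, he0, he⟩ := hT.exists_eigenvector_ne_zero one_ne_zero hw
  have hXe : T (X e) = w • X e := by
    rw [← mul_apply_eq_comp, ← hX.eq, mul_apply_eq_comp, he, map_smul]
  obtain ⟨c, hc⟩ := hT.exists_smul_eq_of_eigenvector hw he0 he hXe
  refine ⟨c, fun x hx => ?_⟩
  obtain ⟨a, rfl⟩ := hT.exists_smul_eq_of_eigenvector hw he0 he hx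
  rw [map_smul, ← hc, smul_comm]

lemma eq_zero_of_commute_of_spectrum_subset (hT : CowenDouglas 1 Ω T) {X : H →L[ℂ] H}
    (hX : Commute X T) (hσ : spectrum ℂ X ⊆ {0}) : X = 0 :=
  hT.ext fun w hw x hx => by
    obtain ⟨c, hc⟩ := hT.exists_forall_eigenvector_apply_eq_smul hX hw
    obtain ⟨e, he0, he⟩ := hT.exists_eigenvector_ne_zero one_ne_zero hw
    have hc0 : c = 0 := hσ (mem_spectrum_of_apply_eq_smul he0 (hc e he))
    rw [hc x hx, hc0, zero_smul, zero_apply]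

lemma commutator_eq_zero [CompleteSpace H] (hT : CowenDouglas 1 Ω T) {a : H →L[ℂ] H}
    (ha : Commute (a * T - T * a) T) : a * T - T * a = 0 := by
  -- Kleinecke–Shirokov needs `‖1‖ = 1`, which fails on the zero space.
  rcases subsingleton_or_nontrivial H with _ | _
  · exact Subsingleton.elim _ _
  · exact hT.eq_zero_of_commute_of_spectrum_subset ha
      (spectrum_subset_zero_of_commute_commutator ha)

lemma forall_eigenvector_apply_eq_zero_or_self (hT : CowenDouglas 1 Ω T) {P : H →L[ℂ] H}
    (hP : IsIdempotentElem P) (hPT : Commute P T) (hw : w ∈ Ω) :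
    (∀ x, T x = w • x → P x = 0) ∨ (∀ x, T x = w • x → P x = x) := by
  obtain ⟨c, hc⟩ := hT.exists_forall_eigenvector_apply_eq_smul hPT hw
  obtain ⟨e, he0, he⟩ := hT.exists_eigenvector_ne_zero one_ne_zero hw
  have hcc : IsIdempotentElem c := by
    have h := congr($hP e)
    rw [mul_apply_eq_comp, hc e he, map_smul, hc e he, smul_smul] at h
    exact smul_left_injective ℂ he0 h
  rcases IsIdempotentElem.iff_eq_zero_or_one.1 hcc with rfl | rfl
  · exact Or.inl fun x hx => by rw [hc x hx, zero_smul]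
  · exact Or.inr fun x hx => by rw [hc x hx, one_smul]

lemma isOpen_setOf_forall_eigenvector_apply_eq_zero [CompleteSpace H] (hT : CowenDouglas 1 Ω T)
    (hΩ : IsOpen Ω) {P : H →L[ℂ] H} (hP : IsIdempotentElem P) (hPT : Commute P T) :
    IsOpen {w | w ∈ Ω ∧ ∀ x, T x = w • x → P x = 0} := by
  rw [isOpen_iff_mem_nhds]
  rintro w₀ ⟨hw₀, hP0⟩
  obtain ⟨e, he0, he⟩ := hT.exists_eigenvector_ne_zero one_ne_zero hw₀
  obtain ⟨u, hu, hue⟩ :=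
    exists_tendsto_eigenvector (HasRightInverse.of_surjective (hT.2.1 w₀ hw₀)) he
  have hne : ∀ᶠ w in 𝓝 w₀, P (u w) - u w ≠ 0 :=
    (((P.continuous.tendsto e).comp hu).sub hu).eventually_ne
      (by rwa [hP0 e he, zero_sub, neg_ne_zero])
  filter_upwards [hΩ.mem_nhds hw₀, hue, hne] with w hw huw hPu
  refine ⟨hw, (hT.forall_eigenvector_apply_eq_zero_or_self hP hPT hw).resolve_right fun h => ?_⟩
  exact hPu (by rw [h _ huw, sub_self])

theorem eq_zero_or_eq_one_of_isIdempotentElem [CompleteSpace H] (hT : CowenDouglas 1 Ω T)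
    (hΩ : IsOpen Ω) (hΩc : IsPreconnected Ω) {P : H →L[ℂ] H} (hP : IsIdempotentElem P)
    (hPT : Commute P T) : P = 0 ∨ P = 1 := by
  set Z : (H →L[ℂ] H) → Set ℂ := fun Q => {w | w ∈ Ω ∧ ∀ x, T x = w • x → Q x = 0}
  have hdisj : Disjoint (Z P) (Z (1 - P)) := by
    refine Set.disjoint_left.2 fun w ⟨hw, h0⟩ ⟨_, h1⟩ => ?_
    obtain ⟨e, he0, he⟩ := hT.exists_eigenvector_ne_zero one_ne_zero hw
    exact he0 (by simpa [h0 e he] using h1 e he)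
  have hcover : Ω ⊆ Z P ∪ Z (1 - P) := fun w hw =>
    (hT.forall_eigenvector_apply_eq_zero_or_self hP hPT hw).imp (fun h => ⟨hw, h⟩)
      (fun h => ⟨hw, fun x hx => by simp [h x hx]⟩)
  rcases hΩc.subset_or_subset (hT.isOpen_setOf_forall_eigenvector_apply_eq_zero hΩ hP hPT)
    (hT.isOpen_setOf_forall_eigenvector_apply_eq_zero hΩ hP.one_sub
      ((Commute.one_left T).sub_left hPT)) hdisj hcover with h | h
  · exact Or.inl (hT.ext fun w hw x hx => (h hw).2 x hx)
  · exact Or.inr (sub_eq_zero.1 (hT.ext fun w hw x hx => (h hw).2 x hx)).symm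

end CowenDouglas

theorem statement12_general
    {H₀ : Type*}
    [NormedAddCommGroup H₀] [InnerProductSpace ℂ H₀] [CompleteSpace H₀]
    (Ω : Set ℂ) (hΩopen : IsOpen Ω) (hΩconn : IsConnected Ω)
    (T₀ : H₀ →L[ℂ] H₀) (h₀ : CowenDouglas 1 Ω T₀) :
    ∀ P : WithLp 2 (H₀ × H₀) →L[ℂ] WithLp 2 (H₀ × H₀),
      P * P = P →
      P * blockOp₂ T₀ (ContinuousLinearMap.id ℂ H₀) T₀ =
        blockOp₂ T₀ (ContinuousLinearMap.id ℂ H₀) T₀ * P →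
      P = 0 ∨ P = 1 := by
  intro P hP hPT
  have hcomm : Commute (blockMatrix ℂ H₀ P) !![T₀, 1; 0, T₀] := by
    have := Commute.map hPT (blockMatrix ℂ H₀)
    rwa [blockMatrix_blockOp₂, ← ContinuousLinearMap.one_def] at this
  have hblocks := Matrix.eq_zero_or_eq_one_of_commute_jordan (fun _ => h₀.commutator_eq_zero)
    (fun _ => h₀.eq_zero_or_eq_one_of_isIdempotentElem hΩopen hΩconn.isPreconnected)
    (IsIdempotentElem.map hP (blockMatrix ℂ H₀)) hcomm
  exact hblocks.imp (fun h => blockMatrix_injective (by simpa using h))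
    (fun h => blockMatrix_injective (by simpa using h))

/-- For `T₀ ∈ B₁(Ω)`, the operator `[[T₀, I], [0, T₀]]` is strongly irreducible: the only
idempotents commuting with it are `0` and `1`. -/
theorem statement12
    {H₀ : Type*}
    [NormedAddCommGroup H₀] [InnerProductSpace ℂ H₀] [CompleteSpace H₀]
    [TopologicalSpace.SeparableSpace H₀]
    (Ω : Set ℂ) (hΩopen : IsOpen Ω) (hΩconn : IsConnected Ω)
    (T₀ : H₀ →L[ℂ] H₀) (h₀ : CowenDouglas 1 Ω T₀) :
    ∀ P : WithLp 2 (H₀ × H₀) →L[ℂ] WithLp 2 (H₀ × H₀),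
      P * P = P →
      P * blockOp₂ T₀ (ContinuousLinearMap.id ℂ H₀) T₀ =
        blockOp₂ T₀ (ContinuousLinearMap.id ℂ H₀) T₀ * P →
      P = 0 ∨ P = 1 :=
  statement12_general Ω hΩopen hΩconn T₀ h₀
end
end
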